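/- If E is a normed space in which every Borel probability measure not concentrated on a line has at most one geometric median, then E is strictly convex. -/

import Mathlib

open MeasureTheory
open scoped ENNReal

/-!
If `E` is not strictly convex there are unit vectors `x ≠ y` with `‖x + y‖ = 2`. Put
`w = (x + y) / 2`, `z = (x - y) / 2` and let `μ` be uniform on `±w, ±z`. For a symmetric pair `±p`
the triangle inequality gives `‖a - p‖ + ‖a + p‖ ≥ 2‖p‖`, with equality at `a = 0`, and at `a = z`
both for `p = z` and for `p = w` (there the sum is `‖y‖ + ‖x‖ = 2`). Hence `0` and `z ≠ 0` are
both geometric medians of `μ`. The four atoms lie on no line, because on a line the norm is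
strictly convex, which would force `x = y`.
-/

section MedianObjective

variable {E : Type*} [SeminormedAddCommGroup E] [MeasurableSpace E]

noncomputable def medianObjective (μ : Measure E) (a : E) : ℝ := ∫ x, (‖a - x‖ - ‖x‖) ∂μ

lemma integrable_norm_sub_sub_norm [OpensMeasurableSpace E] (μ : Measure E) [IsFiniteMeasure μ]
    (a : E) : Integrable (fun x => ‖a - x‖ - ‖x‖) μ := by
  refine .of_bound (by fun_prop : Continuous _).aestronglyMeasurable ‖a‖ (.of_forall fun x => ?_)
  simpa using abs_norm_sub_norm_le (a - x) (-x)

lemma medianObjective_add [OpensMeasurableSpace E] (μ ν : Measure E) [IsFiniteMeasure μ]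
    [IsFiniteMeasure ν] (a : E) :
    medianObjective (μ + ν) a = medianObjective μ a + medianObjective ν a :=
  integral_add_measure (integrable_norm_sub_sub_norm μ a) (integrable_norm_sub_sub_norm ν a)

lemma medianObjective_smul (c : ℝ≥0∞) (μ : Measure E) (a : E) :
    medianObjective (c • μ) a = c.toReal * medianObjective μ a :=
  integral_smul_measure _ c

lemma medianObjective_dirac [MeasurableSingletonClass E] (p a : E) :
    medianObjective (Measure.dirac p) a = ‖a - p‖ - ‖p‖ :=
  integral_dirac _ p

lemma IsMinOn.medianObjective_add [OpensMeasurableSpace E] {μ ν : Measure E} [IsFiniteMeasure μ]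
    [IsFiniteMeasure ν] {a : E} (hμ : IsMinOn (medianObjective μ) Set.univ a)
    (hν : IsMinOn (medianObjective ν) Set.univ a) :
    IsMinOn (medianObjective (μ + ν)) Set.univ a := by
  rw [funext (_root_.medianObjective_add μ ν)]
  exact hμ.add hν

lemma IsMinOn.medianObjective_smul {μ : Measure E} {a : E} (c : ℝ≥0∞)
    (h : IsMinOn (medianObjective μ) Set.univ a) :
    IsMinOn (medianObjective (c • μ)) Set.univ a := isMinOn_univ_iff.2 fun b => by
  simpa only [_root_.medianObjective_smul] using
    mul_le_mul_of_nonneg_left (isMinOn_univ_iff.1 h b) ENNReal.toReal_nonneg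

end MedianObjective

lemma measure_lt_one_of_notMem {α : Type*} [MeasurableSpace α] [MeasurableSingletonClass α]
    {μ : Measure α} [IsProbabilityMeasure μ] {s : Set α} {q : α} (hq : μ {q} ≠ 0) (hqs : q ∉ s) :
    μ s < 1 :=
  calc μ s ≤ μ {q}ᶜ := measure_mono (Set.subset_compl_singleton_iff.2 hqs)
    _ = 1 - μ {q} := prob_compl_eq_one_sub (measurableSet_singleton q)
    _ < 1 := ENNReal.sub_lt_self ENNReal.one_ne_top one_ne_zero hq

section NormedSpace

variable {E : Type*} [NormedAddCommGroup E] [NormedSpace ℝ E]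

lemma two_mul_norm_le_norm_sub_add_norm_add (a p : E) : 2 * ‖p‖ ≤ ‖a - p‖ + ‖a + p‖ :=
  calc 2 * ‖p‖ = ‖(a + p) - (a - p)‖ := by
        rw [add_sub_sub_cancel, ← two_smul ℝ, norm_smul, Real.norm_two]
    _ ≤ ‖a - p‖ + ‖a + p‖ := (norm_sub_le _ _).trans_eq (add_comm _ _)

lemma exists_eq_smul_of_mem_line {u v p : E} (hp : p ∈ Set.range fun t : ℝ => u + t • v)
    (hnp : -p ∈ Set.range fun t : ℝ => u + t • v) : ∃ t : ℝ, p = t • v := by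
  obtain ⟨s, hs⟩ := hp
  obtain ⟨t, ht⟩ := hnp
  dsimp only at hs ht
  refine ⟨(s - t) / 2, ?_⟩
  have hdiff : p - -p = (s - t) • v :=
    calc p - -p = (u + s • v) - (u + t • v) := by rw [hs, ht]
      _ = (s - t) • v := by module
  rw [div_eq_inv_mul, mul_smul, ← hdiff]
  module

lemma smul_eq_smul_of_norm_add_eq (v : E) {α β : ℝ} (h₁ : ‖α • v‖ = ‖β • v‖)
    (h₂ : ‖α • v + β • v‖ = ‖α • v‖ + ‖β • v‖) : α • v = β • v := by
  rcases eq_or_ne v 0 with rfl | hv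
  · simp
  have hv' : ‖v‖ ≠ 0 := norm_ne_zero_iff.2 hv
  rw [← add_smul, norm_smul, norm_smul, norm_smul] at *
  congr 1
  apply eq_of_norm_eq_of_norm_add_eq (mul_right_cancel₀ hv' h₁)
  exact mul_right_cancel₀ hv' (h₂.trans (add_mul _ _ _).symm)

lemma add_eq_sub_of_subset_line {w z u v : E} (h₁ : ‖w + z‖ = ‖w - z‖)
    (h₂ : ‖(w + z) + (w - z)‖ = ‖w + z‖ + ‖w - z‖)
    (hL : {w, -w, z, -z} ⊆ Set.range fun t : ℝ => u + t • v) : w + z = w - z := by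
  obtain ⟨a, rfl⟩ := exists_eq_smul_of_mem_line (p := w) (hL (by simp)) (hL (by simp))
  obtain ⟨b, rfl⟩ := exists_eq_smul_of_mem_line (p := z) (hL (by simp)) (hL (by simp))
  rw [← add_smul, ← sub_smul] at *
  exact smul_eq_smul_of_norm_add_eq v h₁ h₂

end NormedSpace

section FourPoint

variable {E : Type*} [NormedAddCommGroup E] [MeasurableSpace E] [BorelSpace E]

noncomputable def symmPair (p : E) : Measure E := Measure.dirac p + Measure.dirac (-p)

instance (p : E) : IsFiniteMeasure (symmPair p) := by
  unfold symmPair; infer_instance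

lemma medianObjective_symmPair (p a : E) :
    medianObjective (symmPair p) a = ‖a - p‖ + ‖a + p‖ - 2 * ‖p‖ := by
  rw [symmPair, medianObjective_add, medianObjective_dirac, medianObjective_dirac, sub_neg_eq_add,
    norm_neg]
  ring

lemma isMinOn_medianObjective_symmPair [NormedSpace ℝ E] {p a : E}
    (ha : ‖a - p‖ + ‖a + p‖ = 2 * ‖p‖) :
    IsMinOn (medianObjective (symmPair p)) Set.univ a := isMinOn_univ_iff.2 fun b => by
  rw [medianObjective_symmPair, medianObjective_symmPair, ha]
  linarith [two_mul_norm_le_norm_sub_add_norm_add b p]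

noncomputable def fourPointMeasure (w z : E) : Measure E :=
  (4 : ℝ≥0∞)⁻¹ • (symmPair w + symmPair z)

instance (w z : E) : IsProbabilityMeasure (fourPointMeasure w z) := by
  constructor
  simp only [fourPointMeasure, symmPair, Measure.smul_apply, Measure.add_apply, measure_univ,
    smul_eq_mul]
  rw [← ENNReal.div_eq_inv_mul, ENNReal.div_eq_one_iff] <;> norm_num

lemma isMinOn_medianObjective_fourPointMeasure [NormedSpace ℝ E] {w z a : E}
    (hw : ‖a - w‖ + ‖a + w‖ = 2 * ‖w‖) (hz : ‖a - z‖ + ‖a + z‖ = 2 * ‖z‖) :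
    IsMinOn (medianObjective (fourPointMeasure w z)) Set.univ a :=
  ((isMinOn_medianObjective_symmPair hw).medianObjective_add
    (isMinOn_medianObjective_symmPair hz)).medianObjective_smul _

lemma fourPointMeasure_lt_one {w z : E} {s : Set E} (hs : ¬{w, -w, z, -z} ⊆ s) :
    fourPointMeasure w z s < 1 := by
  obtain ⟨q, hq, hqs⟩ := Set.not_subset.1 hs
  refine measure_lt_one_of_notMem ?_ hqs
  rcases hq with rfl | rfl | rfl | rfl <;> simp [fourPointMeasure, symmPair]

end FourPoint

/-- If every Borel probability measure on `E` not concentrated on a line has at most one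
geometric median, then `E` is strictly convex. -/
theorem stmt8 {E : Type*} [NormedAddCommGroup E] [NormedSpace ℝ E]
    [MeasurableSpace E] [BorelSpace E]
    (h : ∀ μ : Measure E, IsProbabilityMeasure μ →
      (∀ u v : E, v ≠ 0 → μ (Set.range fun t : ℝ => u + t • v) < 1) →
      Set.Subsingleton
        {α : E | IsMinOn (fun a : E => ∫ x, (‖a - x‖ - ‖x‖) ∂μ) Set.univ α}) :
    StrictConvexSpace ℝ E := by
  refine StrictConvexSpace.of_norm_add_ne_two fun x y hx hy hne hxy => hne ?_
  set w : E := (2 : ℝ)⁻¹ • (x + y)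
  set z : E := (2 : ℝ)⁻¹ • (x - y)
  have hx' : w + z = x := by module
  have hy' : w - z = y := by module
  have hw : ‖w‖ = 1 := by rw [norm_smul, hxy]; norm_num
  have hline (u v : E) (_ : v ≠ 0) :
      fourPointMeasure w z (Set.range fun t : ℝ => u + t • v) < 1 :=
    fourPointMeasure_lt_one fun hL => hne <| by
      simpa only [hx', hy'] using add_eq_sub_of_subset_line (by rw [hx', hy', hx, hy])
        (by rw [hx', hy', hx, hy, hxy]; norm_num) hL
  have hmin₀ : IsMinOn (medianObjective (fourPointMeasure w z)) Set.univ 0 :=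
    isMinOn_medianObjective_fourPointMeasure (by simp only [zero_sub, norm_neg, zero_add]; ring)
      (by simp only [zero_sub, norm_neg, zero_add]; ring)
  have hmin_z : IsMinOn (medianObjective (fourPointMeasure w z)) Set.univ z := by
    refine isMinOn_medianObjective_fourPointMeasure ?_ ?_
    · rw [← norm_neg, neg_sub, hy', add_comm z, hx', hx, hy, hw]; norm_num
    · rw [sub_self, norm_zero, zero_add, ← two_smul ℝ, norm_smul, Real.norm_two]
  have hz : z = 0 := h _ inferInstance hline hmin_z hmin₀
  rw [← hx', ← hy', hz, add_zero, sub_zero]
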